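/- Let G be a compact Lie group, p : E → B a G-fibration, and let H and K be closed subgroups of G such that the fixed-point set E^H is K-invariant. Then the restriction p|_{E^H} : E^H → B^H is a K-map and, for every n ≥ 2, TC_{K,n}[p|_{E^H} : E^H → B^H] ≤ TC_{G,n}[p : E → B]. -/

import Mathlib

open Set

noncomputable section

/-- Two maps `f g : X → Y` are `G`-homotopic on a subset `S ⊆ X`, with respect to the
actions `σX` on `X` and `σY` on `Y`. -/
def GHomotopicOn (G : Type*) {X Y : Type*} [TopologicalSpace X] [TopologicalSpace Y]
    (σX : G → X → X) (σY : G → Y → Y) (f g : X → Y) (S : Set X) : Prop :=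
  ∃ H : X × unitInterval → Y,
    ContinuousOn H (S ×ˢ (Set.univ : Set unitInterval)) ∧
    (∀ x ∈ S, H (x, 0) = f x) ∧
    (∀ x ∈ S, H (x, 1) = g x) ∧
    (∀ a : G, ∀ x ∈ S, ∀ t, H (σX a x, t) = σY a (H (x, t)))

/-- The equivariant sectional category `secat_G(p)` of a map `p : E → B`, with respect to
actions `σE` on `E` and `σB` on `B`: the least `k` such that `B` is covered by `k`
`G`-invariant open sets, each admitting a continuous equivariant homotopy section of `p`;
`⊤` if there is no such `k`. -/
def eqSecat (G : Type*) {E B : Type*} [TopologicalSpace E] [TopologicalSpace B]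
    (σE : G → E → E) (σB : G → B → B) (p : E → B) : ℕ∞ :=
  sInf {N : ℕ∞ | ∃ k : ℕ, N = (k : ℕ∞) ∧ ∃ U : Fin k → Set B,
    (∀ i, IsOpen (U i)) ∧
    (∀ i, ∀ a : G, ∀ b ∈ U i, σB a b ∈ U i) ∧
    (∀ b : B, ∃ i, b ∈ U i) ∧
    (∀ i, ∃ s : B → E, ContinuousOn s (U i) ∧
      (∀ a : G, ∀ b ∈ U i, s (σB a b) = σE a (s b)) ∧
      GHomotopicOn G σB σB (p ∘ s) id (U i))}

/-- A `G`-invariant open subset `U` of `X` is `G`-categorical if the inclusion `U ↪ X`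
is `G`-homotopic to a map taking values in a single orbit. -/
def GCategoricalSet (G : Type*) {X : Type*} [TopologicalSpace X]
    (σ : G → X → X) (U : Set X) : Prop :=
  IsOpen U ∧ (∀ a : G, ∀ x ∈ U, σ a x ∈ U) ∧
  ∃ x₀ : X, ∃ H : X × unitInterval → X,
    ContinuousOn H (U ×ˢ (Set.univ : Set unitInterval)) ∧
    (∀ x ∈ U, H (x, 0) = x) ∧
    (∀ x ∈ U, ∃ a : G, H (x, 1) = σ a x₀) ∧
    (∀ a : G, ∀ x ∈ U, ∀ t, H (σ a x, t) = σ a (H (x, t)))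

/-- The equivariant (Lusternik–Schnirelmann) category `cat_G(X)`: the least number of
`G`-categorical open sets covering `X`. -/
def eqCat (G : Type*) {X : Type*} [TopologicalSpace X] (σ : G → X → X) : ℕ∞ :=
  sInf {N : ℕ∞ | ∃ k : ℕ, N = (k : ℕ∞) ∧ ∃ U : Fin k → Set X,
    (∀ x : X, ∃ i, x ∈ U i) ∧ (∀ i, GCategoricalSet G σ (U i))}

/-- The time `i/(n-1)` in the unit interval, for `i : Fin n`. -/
def seqTime (n : ℕ) (i : Fin n) : unitInterval :=
  ⟨(i : ℝ) / ((n : ℝ) - 1), by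
    have h0 : 0 < n := i.pos
    have h1 : (0 : ℝ) ≤ (n : ℝ) - 1 := by
      have : (1 : ℝ) ≤ (n : ℝ) := by exact_mod_cast h0
      linarith
    refine ⟨div_nonneg (Nat.cast_nonneg _) h1, ?_⟩
    rcases eq_or_lt_of_le h1 with h | h
    · rw [← h, div_zero]; norm_num
    · rw [div_le_one h]
      have : ((i : ℕ) : ℝ) + 1 ≤ (n : ℝ) := by exact_mod_cast i.is_lt
      linarith⟩

/-- The generalized free path space fibration
`π_n : X^I → X^n`, `γ ↦ (γ(0), γ(1/(n-1)), …, γ(1))`. -/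
def piNMap (X : Type*) [TopologicalSpace X] (n : ℕ) :
    C(unitInterval, X) → (Fin n → X) :=
  fun γ i => γ (seqTime n i)

/-- The action induced on the free path space `X^I` by an action on `X`. -/
def pathAct {G X : Type*} [TopologicalSpace X] (σ : G → X → X)
    (hc : ∀ a : G, Continuous (σ a)) : G → C(unitInterval, X) → C(unitInterval, X) :=
  fun a γ => ⟨fun t => σ a (γ t), (hc a).comp γ.continuous⟩

/-- The diagonal action on `X^n` induced by an action on `X`. -/
def diagAct {G X : Type*} (σ : G → X → X) (n : ℕ) : G → (Fin n → X) → (Fin n → X) :=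
  fun a x i => σ a (x i)

/-- The sequential equivariant topological complexity `TC_{G,n}(X) := secat_G(π_n)`. -/
def eqTC (G : Type*) {X : Type*} [TopologicalSpace X] (σ : G → X → X)
    (hc : ∀ a : G, Continuous (σ a)) (n : ℕ) : ℕ∞ :=
  eqSecat G (pathAct σ hc) (diagAct σ n) (piNMap X n)

/-- The `n`-fold fibre product `E^n_B` of `p : E → B`. -/
def FibProd {E B : Type*} (p : E → B) (n : ℕ) : Type _ :=
  {x : Fin n → E // ∀ i j, p (x i) = p (x j)}

instance {E B : Type*} [TopologicalSpace E] (p : E → B) (n : ℕ) :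
    TopologicalSpace (FibProd p n) :=
  inferInstanceAs (TopologicalSpace {x : Fin n → E // ∀ i j, p (x i) = p (x j)})

/-- The space `E^I_B` of paths in `E` lying in a single fibre of `p : E → B`. -/
def ParPath {E B : Type*} [TopologicalSpace E] (p : E → B) : Type _ :=
  {γ : C(unitInterval, E) // ∀ s t : unitInterval, p (γ s) = p (γ t)}

instance {E B : Type*} [TopologicalSpace E] (p : E → B) :
    TopologicalSpace (ParPath p) :=
  inferInstanceAs (TopologicalSpace
    {γ : C(unitInterval, E) // ∀ s t : unitInterval, p (γ s) = p (γ t)})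

/-- The parametrized endpoint fibration `Π_n : E^I_B → E^n_B`. -/
def PiN {E B : Type*} [TopologicalSpace E] (p : E → B) (n : ℕ) :
    ParPath p → FibProd p n :=
  fun γ => ⟨fun i => γ.1 (seqTime n i), fun _ _ => γ.2 _ _⟩

/-- The action induced on `E^n_B` by a fibrewise-compatible action on `E`. -/
def fibProdAct {G E B : Type*} (σE : G → E → E) (p : E → B)
    (hp : ∀ a : G, ∀ e e' : E, p e = p e' → p (σE a e) = p (σE a e')) (n : ℕ) :
    G → FibProd p n → FibProd p n :=
  fun a x => ⟨fun i => σE a (x.1 i), fun i j => hp a _ _ (x.2 i j)⟩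

/-- The action induced on `E^I_B` by a fibrewise-compatible action on `E`. -/
def parPathAct {G E B : Type*} [TopologicalSpace E] (σE : G → E → E)
    (hc : ∀ a : G, Continuous (σE a)) (p : E → B)
    (hp : ∀ a : G, ∀ e e' : E, p e = p e' → p (σE a e) = p (σE a e')) :
    G → ParPath p → ParPath p :=
  fun a γ => ⟨⟨fun t => σE a (γ.1 t), (hc a).comp γ.1.continuous⟩,
    fun s t => hp a _ _ (γ.2 s t)⟩

/-- The sequential equivariant parametrized topological complexity
`TC_{G,n}[p : E → B] := secat_G(Π_n : E^I_B → E^n_B)`. -/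
def eqPTC (G : Type*) {E B : Type*} [TopologicalSpace E] (σE : G → E → E)
    (hc : ∀ a : G, Continuous (σE a)) (p : E → B)
    (hp : ∀ a : G, ∀ e e' : E, p e = p e' → p (σE a e) = p (σE a e')) (n : ℕ) : ℕ∞ :=
  eqSecat G (parPathAct σE hc p hp) (fibProdAct σE p hp n) (PiN p n)

/-- `σ` is a continuous action of the topological group `G` on `X`,
i.e. `X` is a `G`-space. -/
def IsGAction (G : Type*) [Group G] [TopologicalSpace G] {X : Type*} [TopologicalSpace X]
    (σ : G → X → X) : Prop :=
  (∀ x, σ 1 x = x) ∧ (∀ a b x, σ (a * b) x = σ a (σ b x)) ∧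
  Continuous (fun q : G × X => σ q.1 q.2)

/-- `p : E → B` is a `G`-fibration: a continuous equivariant map with the `G`-homotopy
lifting property with respect to all `G`-spaces. -/
def IsGFibration (G : Type*) [Group G] [TopologicalSpace G] {E : Type u} {B : Type v}
    [TopologicalSpace E] [TopologicalSpace B]
    (σE : G → E → E) (σB : G → B → B) (p : E → B) : Prop :=
  Continuous p ∧ (∀ a e, p (σE a e) = σB a (p e)) ∧
  ∀ (X : Type (max u v)) (_ : TopologicalSpace X) (σX : G → X → X), IsGAction G σX →
    ∀ (f : X → E) (h : X × unitInterval → B),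
      Continuous f → (∀ a x, f (σX a x) = σE a (f x)) →
      Continuous h → (∀ a x t, h (σX a x, t) = σB a (h (x, t))) →
      (∀ x, h (x, 0) = p (f x)) →
      ∃ hl : X × unitInterval → E, Continuous hl ∧
        (∀ a x t, hl (σX a x, t) = σE a (hl (x, t))) ∧
        (∀ x, hl (x, 0) = f x) ∧ (∀ x t, p (hl (x, t)) = h (x, t))

/-- A `G`-space is `G`-connected if all fixed point sets of closed subgroups
are path-connected. -/
def GConnected (G : Type*) [Group G] [TopologicalSpace G] {X : Type*} [TopologicalSpace X]
    (σ : G → X → X) : Prop :=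
  ∀ H : Subgroup G, IsClosed (H : Set G) →
    IsPathConnected {x : X | ∀ h ∈ H, σ h x = x}

/-- A `G`-space is `G`-contractible if its identity map is `G`-homotopic to a map
taking values in a single orbit. -/
def GContractible (G : Type*) {X : Type*} [TopologicalSpace X] (σ : G → X → X) : Prop :=
  ∃ x₀ : X, ∃ H : X × unitInterval → X, Continuous H ∧
    (∀ x, H (x, 0) = x) ∧
    (∀ x, ∃ a : G, H (x, 1) = σ a x₀) ∧
    (∀ a : G, ∀ x t, H (σ a x, t) = σ a (H (x, t)))

/-- Fibrewise `G`-homotopy between fibrewise maps `f g : E → E'` over `B`. -/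
def FibrewiseGHomotopic (G : Type*) {E E' B : Type*} [TopologicalSpace E]
    [TopologicalSpace E'] (σE : G → E → E) (σE' : G → E' → E')
    (p : E → B) (p' : E' → B) (f g : E → E') : Prop :=
  ∃ H : E × unitInterval → E', Continuous H ∧
    (∀ x, H (x, 0) = f x) ∧ (∀ x, H (x, 1) = g x) ∧
    (∀ a : G, ∀ x t, H (σE a x, t) = σE' a (H (x, t))) ∧
    (∀ x t, p' (H (x, t)) = p x)

end

/-!
The `H`-fixed points of the parametrized path fibration `Π_n : E^I_B → E^n_B`, with the residual
`K`-action, are exactly the parametrized path fibration of `p^H : E^H → B^H`. A `G`-invariant open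
set with a `G`-equivariant homotopy section of `Π_n` restricts to a `K`-invariant open set of
`(E^n_B)^H` with a `K`-equivariant homotopy section of `Π_n^H`: equivariance forces the section
and the homotopy to send `H`-fixed points to `H`-fixed points.
-/

open Topology

def fixedSet {G X : Type*} (σ : G → X → X) (S : Set G) : Set X :=
  {x | ∀ a ∈ S, σ a x = x}

theorem mapsTo_fixedSet {G X Y : Type*} {σX : G → X → X} {σY : G → Y → Y} {f : X → Y}
    (hf : ∀ a x, f (σX a x) = σY a (f x)) (S : Set G) :
    MapsTo f (fixedSet σX S) (fixedSet σY S) :=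
  fun x hx a ha => by rw [← hf, hx a ha]

theorem fibrewise_of_equivariant {G E B : Type*} {σE : G → E → E} {σB : G → B → B}
    {p : E → B} (hp : ∀ a x, p (σE a x) = σB a (p x)) (a : G) (e e' : E) (h : p e = p e') :
    p (σE a e) = p (σE a e') := by
  rw [hp, hp, h]

/-- The condition on a single set `U` of a cover in the definition of `eqSecat`. -/
def HasEqHomotopySectionOn (G : Type*) {E B : Type*} [TopologicalSpace E] [TopologicalSpace B]
    (σE : G → E → E) (σB : G → B → B) (p : E → B) (U : Set B) : Prop :=
  ∃ s : B → E, ContinuousOn s U ∧ (∀ a : G, ∀ b ∈ U, s (σB a b) = σE a (s b)) ∧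
    GHomotopicOn G σB σB (p ∘ s) id U

theorem ContinuousOn.exists_codRestrict {X Y : Type*} [TopologicalSpace X] [TopologicalSpace Y]
    {f : X → Y} {U : Set X} {T : Set Y} (hf : ContinuousOn f U) (hfT : MapsTo f U T)
    (d : X → T) : ∃ g : X → T, ContinuousOn g U ∧ ∀ x ∈ U, (g x : Y) = f x := by
  classical
  refine ⟨fun x => if hx : x ∈ U then ⟨f x, hfT hx⟩ else d x, ?_, fun x hx => by simp [hx]⟩
  refine IsInducing.subtypeVal.continuousOn_iff.2 (hf.congr fun x hx => ?_)
  simp [hx]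

section

variable {G K P Q P' Q' : Type*} [TopologicalSpace P] [TopologicalSpace Q]
  [TopologicalSpace P'] [TopologicalSpace Q'] {σP : G → P → P} {σQ : G → Q → Q} {π : P → Q}
  {σP' : K → P' → P'} {σQ' : K → Q' → Q'} {π' : P' → Q'}

theorem eqSecat_le_of_preimage (φ : K → G) (f : Q' → Q) (hf : Continuous f)
    (hfφ : ∀ k y, f (σQ' k y) = σQ (φ k) (f y))
    (hU : ∀ U, IsOpen U → (∀ a, ∀ b ∈ U, σQ a b ∈ U) → HasEqHomotopySectionOn G σP σQ π U →
      HasEqHomotopySectionOn K σP' σQ' π' (f ⁻¹' U)) :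
    eqSecat K σP' σQ' π' ≤ eqSecat G σP σQ π := by
  refine sInf_le_sInf ?_
  rintro _ ⟨k, rfl, U, hUo, hUi, hUc, hUs⟩
  refine ⟨k, rfl, fun i => f ⁻¹' U i, fun i => (hUo i).preimage hf, fun i a y hy => ?_,
    fun y => hUc (f y), fun i => hU _ (hUo i) (hUi i) (hUs i)⟩
  simpa only [mem_preimage, hfφ] using hUi i (φ a) (f y) hy

theorem HasEqHomotopySectionOn.fixedSet_restrict {S : Set G} (φ : K → G)
    (hP : ∀ k, MapsTo (σP (φ k)) (fixedSet σP S) (fixedSet σP S))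
    (hQ : ∀ k, MapsTo (σQ (φ k)) (fixedSet σQ S) (fixedSet σQ S))
    (hπ : MapsTo π (fixedSet σP S) (fixedSet σQ S))
    -- `d` only supplies the (irrelevant) values of the restricted section outside `U`
    (d : fixedSet σQ S → fixedSet σP S) {U : Set Q} (hUi : ∀ a, ∀ b ∈ U, σQ a b ∈ U)
    (hU : HasEqHomotopySectionOn G σP σQ π U) :
    HasEqHomotopySectionOn K (fun k => (hP k).restrict) (fun k => (hQ k).restrict)
      hπ.restrict (Subtype.val ⁻¹' U) := by
  obtain ⟨s, hsc, hse, Ht, hHtc, hHt0, hHt1, hHte⟩ := hU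
  have hval_maps : MapsTo (Prod.map Subtype.val id) ((Subtype.val ⁻¹' U : Set (fixedSet σQ S)) ×ˢ
      (univ : Set unitInterval)) (U ×ˢ univ) := (mapsTo_preimage _ U).prodMap (mapsTo_univ _ _)
  have hs_fix : MapsTo (s ∘ Subtype.val) (Subtype.val ⁻¹' U : Set (fixedSet σQ S))
      (fixedSet σP S) := by
    intro y hy a ha
    simp only [Function.comp_apply]
    rw [← hse a y hy, y.2 a ha]
  have hHt_fix : MapsTo (Ht ∘ Prod.map Subtype.val id)
      ((Subtype.val ⁻¹' U : Set (fixedSet σQ S)) ×ˢ (univ : Set unitInterval))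
      (fixedSet σQ S) := by
    rintro ⟨y, t⟩ ⟨hy, -⟩ a ha
    simp only [Function.comp_apply, Prod.map_apply, id]
    rw [← hHte a y hy, y.2 a ha]
  obtain ⟨s', hs'c, hs'⟩ := (hsc.comp continuous_subtype_val.continuousOn
    (mapsTo_preimage _ U)).exists_codRestrict hs_fix d
  obtain ⟨Ht', hHt'c, hHt'⟩ := (hHtc.comp (continuous_subtype_val.prodMap
    continuous_id).continuousOn hval_maps).exists_codRestrict hHt_fix Prod.fst
  have hs'U (y : fixedSet σQ S) (hy : y.1 ∈ U) : (s' y : P) = s y := hs' y hy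
  have hHt'U (y : fixedSet σQ S) (hy : y.1 ∈ U) (t) : (Ht' (y, t) : Q) = Ht (y, t) :=
    hHt' (y, t) ⟨hy, trivial⟩
  refine ⟨s', hs'c, fun k y hy => Subtype.ext ?_, Ht', hHt'c, fun y hy => Subtype.ext ?_,
    fun y hy => Subtype.ext ?_, fun k y hy t => Subtype.ext ?_⟩
  · show (s' ⟨σQ (φ k) y, hQ k y.2⟩ : P) = σP (φ k) (s' y)
    rw [hs'U _ (hUi _ _ hy), hs'U _ hy]
    exact hse _ _ hy
  · show (Ht' (y, 0) : Q) = π (s' y)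
    rw [hHt'U _ hy, hs'U _ hy]
    exact hHt0 _ hy
  · exact (hHt'U _ hy 1).trans (hHt1 _ hy)
  · show (Ht' (⟨σQ (φ k) y, hQ k y.2⟩, t) : Q) = σQ (φ k) (Ht' (y, t))
    rw [hHt'U _ (hUi _ _ hy), hHt'U _ hy]
    exact hHte _ _ hy t

theorem eqSecat_fixedSet_restrict_le {S : Set G} (φ : K → G)
    (hP : ∀ k, MapsTo (σP (φ k)) (fixedSet σP S) (fixedSet σP S))
    (hQ : ∀ k, MapsTo (σQ (φ k)) (fixedSet σQ S) (fixedSet σQ S))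
    (hπ : MapsTo π (fixedSet σP S) (fixedSet σQ S))
    (d : fixedSet σQ S → fixedSet σP S) :
    eqSecat K (fun k => (hP k).restrict) (fun k => (hQ k).restrict) hπ.restrict ≤
      eqSecat G σP σQ π :=
  eqSecat_le_of_preimage φ Subtype.val continuous_subtype_val (fun _ _ => rfl)
    fun _ _ hUi hU => hU.fixedSet_restrict φ hP hQ hπ d hUi

theorem HasEqHomotopySectionOn.retract {σP' : G → P' → P'} {σQ' : G → Q' → Q'} {π' : P' → Q'}
    {r : P → P'} {rQ : Q → Q'} {e : Q' → Q} (hr : Continuous r) (hrQ : Continuous rQ)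
    (he : Continuous e) (hr_eq : ∀ a x, r (σP a x) = σP' a (r x))
    (hrQ_eq : ∀ a y, rQ (σQ a y) = σQ' a (rQ y)) (he_eq : ∀ a y, e (σQ' a y) = σQ a (e y))
    (hcomm : ∀ x, π' (r x) = rQ (π x)) (hrQe : ∀ y, rQ (e y) = y) {U : Set Q}
    (hU : HasEqHomotopySectionOn G σP σQ π U) :
    HasEqHomotopySectionOn G σP' σQ' π' (e ⁻¹' U) := by
  obtain ⟨s, hsc, hse, Ht, hHtc, hHt0, hHt1, hHte⟩ := hU
  refine ⟨r ∘ s ∘ e, hr.comp_continuousOn (hsc.comp he.continuousOn (mapsTo_preimage e U)),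
    fun a y hy => ?_, fun q => rQ (Ht (e q.1, q.2)), ?_, fun y hy => ?_, fun y hy => ?_,
    fun a y hy t => ?_⟩
  · simp only [Function.comp_apply, he_eq, hse a _ hy, hr_eq]
  · exact hrQ.comp_continuousOn (hHtc.comp (he.prodMap continuous_id).continuousOn
      ((mapsTo_preimage e U).prodMap (mapsTo_univ id univ)))
  · simp only [hHt0 _ hy, Function.comp_apply, hcomm]
  · simp only [hHt1 _ hy, id, hrQe]
  · simp only [he_eq, hHte a _ hy, hrQ_eq]

theorem eqSecat_le_of_retract {σP' : G → P' → P'} {σQ' : G → Q' → Q'} {π' : P' → Q'}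
    {r : P → P'} {rQ : Q → Q'} {e : Q' → Q} (hr : Continuous r) (hrQ : Continuous rQ)
    (he : Continuous e) (hr_eq : ∀ a x, r (σP a x) = σP' a (r x))
    (hrQ_eq : ∀ a y, rQ (σQ a y) = σQ' a (rQ y)) (he_eq : ∀ a y, e (σQ' a y) = σQ a (e y))
    (hcomm : ∀ x, π' (r x) = rQ (π x)) (hrQe : ∀ y, rQ (e y) = y) :
    eqSecat G σP' σQ' π' ≤ eqSecat G σP σQ π :=
  eqSecat_le_of_preimage id e he he_eq fun _ _ _ hU =>
    hU.retract hr hrQ he hr_eq hrQ_eq he_eq hcomm hrQe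

end

section

variable {G E B : Type*} {σE : G → E → E} {p : E → B}
  {hp : ∀ a e e', p e = p e' → p (σE a e) = p (σE a e')} {S : Set G}

theorem mem_fixedSet_fibProdAct {n : ℕ} {x : FibProd p n} :
    x ∈ fixedSet (fibProdAct σE p hp n) S ↔ ∀ i, x.1 i ∈ fixedSet σE S :=
  ⟨fun hx i a ha => congrArg (fun x : FibProd p n => x.1 i) (hx a ha),
    fun hx a ha => Subtype.ext (funext fun i => hx i a ha)⟩

theorem mem_fixedSet_parPathAct [TopologicalSpace E] {hc : ∀ a, Continuous (σE a)}
    {γ : ParPath p} :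
    γ ∈ fixedSet (parPathAct σE hc p hp) S ↔ ∀ t, γ.1 t ∈ fixedSet σE S :=
  ⟨fun hγ t a ha => congrArg (fun γ : ParPath p => γ.1 t) (hγ a ha),
    fun hγ a ha => Subtype.ext (ContinuousMap.ext fun t => hγ t a ha)⟩

end

section

variable {G K E B : Type*} [TopologicalSpace E] {σE : G → E → E} {σB : G → B → B} {p : E → B}
  {hc : ∀ a, Continuous (σE a)} (hp : ∀ a x, p (σE a x) = σB a (p x)) {S : Set G} {n : ℕ}

def ParPath.ofFixed (γ : fixedSet (parPathAct σE hc p (fibrewise_of_equivariant hp)) S) :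
    ParPath (mapsTo_fixedSet hp S).restrict :=
  ⟨⟨fun t => ⟨γ.1.1 t, mem_fixedSet_parPathAct.1 γ.2 t⟩, γ.1.1.continuous.subtype_mk _⟩,
    fun s t => Subtype.ext (γ.1.2 s t)⟩

def FibProd.ofFixed (x : fixedSet (fibProdAct σE p (fibrewise_of_equivariant hp) n) S) :
    FibProd (mapsTo_fixedSet hp S).restrict n :=
  ⟨fun i => ⟨x.1.1 i, mem_fixedSet_fibProdAct.1 x.2 i⟩, fun i j => Subtype.ext (x.1.2 i j)⟩

def FibProd.toFixed (y : FibProd (mapsTo_fixedSet hp S).restrict n) :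
    fixedSet (fibProdAct σE p (fibrewise_of_equivariant hp) n) S :=
  ⟨⟨fun i => (y.1 i).1, fun i j => congrArg Subtype.val (y.2 i j)⟩,
    mem_fixedSet_fibProdAct.2 fun i => (y.1 i).2⟩

theorem ParPath.continuous_ofFixed : Continuous (ParPath.ofFixed (hc := hc) hp (S := S)) := by
  refine Continuous.subtype_mk ?_ _
  exact (ContinuousMap.isInducing_postcomp ⟨Subtype.val, continuous_subtype_val⟩
    IsInducing.subtypeVal).continuous_iff.2 (continuous_subtype_val.comp continuous_subtype_val)

theorem FibProd.continuous_ofFixed : Continuous (FibProd.ofFixed hp (S := S) (n := n)) := by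
  have hval : Continuous fun x : fixedSet (fibProdAct σE p (fibrewise_of_equivariant hp) n) S =>
      (x.1.1 : Fin n → E) := continuous_subtype_val.comp continuous_subtype_val
  exact (continuous_pi fun i => ((continuous_apply i).comp hval).subtype_mk _).subtype_mk _

theorem FibProd.continuous_toFixed : Continuous (FibProd.toFixed hp (S := S) (n := n)) :=
  ((continuous_pi fun i => continuous_subtype_val.comp
    ((continuous_apply i).comp continuous_subtype_val)).subtype_mk _).subtype_mk _

theorem eqPTC_fixedSet_le (φ : K → G)
    (hE : ∀ k, MapsTo (σE (φ k)) (fixedSet σE S) (fixedSet σE S)) (hn : 0 < n) :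
    eqPTC K (fun k => (hE k).restrict) (fun k => (hc (φ k)).restrict (hE k))
        (mapsTo_fixedSet hp S).restrict
        (fun k x y h => Subtype.ext (fibrewise_of_equivariant hp (φ k) x y
          (congrArg Subtype.val h))) n ≤
      eqPTC G σE hc p (fibrewise_of_equivariant hp) n := by
  set σP := parPathAct σE hc p (fibrewise_of_equivariant hp)
  set σQ := fibProdAct σE p (fibrewise_of_equivariant hp) n
  have hP (k : K) : MapsTo (σP (φ k)) (fixedSet σP S) (fixedSet σP S) := fun γ hγ =>
    mem_fixedSet_parPathAct.2 fun t => hE k (mem_fixedSet_parPathAct.1 hγ t)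
  have hQ (k : K) : MapsTo (σQ (φ k)) (fixedSet σQ S) (fixedSet σQ S) := fun x hx =>
    mem_fixedSet_fibProdAct.2 fun i => hE k (mem_fixedSet_fibProdAct.1 hx i)
  have hπ : MapsTo (PiN p n) (fixedSet σP S) (fixedSet σQ S) :=
    mapsTo_fixedSet (f := PiN p n) (fun _ _ => rfl) S
  have const_path : fixedSet σQ S → fixedSet σP S := fun x =>
    ⟨⟨ContinuousMap.const _ (x.1.1 ⟨0, hn⟩), fun _ _ => rfl⟩,
      mem_fixedSet_parPathAct.2 fun _ => mem_fixedSet_fibProdAct.1 x.2 _⟩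
  calc _ ≤ eqSecat K (fun k => (hP k).restrict) (fun k => (hQ k).restrict) hπ.restrict :=
        eqSecat_le_of_retract (ParPath.continuous_ofFixed hp) (FibProd.continuous_ofFixed hp)
          (FibProd.continuous_toFixed hp) (fun _ _ => rfl) (fun _ _ => rfl) (fun _ _ => rfl)
          (fun _ => rfl) (fun _ => rfl)
    _ ≤ _ := eqSecat_fixedSet_restrict_le φ hP hQ hπ const_path

end

theorem stmt_15 {G : Type*} [Group G] [TopologicalSpace G]
    {E B : Type*} [TopologicalSpace E] [TopologicalSpace B]
    [MulAction G E] [ContinuousSMul G E] [MulAction G B]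
    (p : E → B)
    (hp : IsGFibration G (fun (a : G) (x : E) => a • x) (fun (a : G) (b : B) => a • b) p)
    (H K : Subgroup G)
    -- the fixed point set `E^H` is `K`-invariant:
    (hinv : ∀ k ∈ K, ∀ x : E, (∀ h ∈ H, h • x = x) → ∀ h ∈ H, h • (k • x) = k • x)
    (n : ℕ) (hn : 2 ≤ n) :
    -- the restriction `p|_{E^H} : E^H → B^H` is a `K`-map:
    (∀ (k : ↥K) (x : {x : E // ∀ h ∈ H, h • x = x}),
      p ((k : G) • x.1) = (k : G) • p x.1) ∧
    eqPTC ↥K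
        (fun (k : ↥K) (x : {x : E // ∀ h ∈ H, h • x = x}) =>
          (⟨(k : G) • x.1, hinv k.1 k.2 x.1 x.2⟩ : {x : E // ∀ h ∈ H, h • x = x}))
        (fun k => by fun_prop)
        (fun x : {x : E // ∀ h ∈ H, h • x = x} =>
          (⟨p x.1, fun h hh => by
            have hpe : ∀ (g : G) (y : E), p (g • y) = g • p y := hp.2.1
            rw [← hpe, x.2 h hh]⟩ : {b : B // ∀ h ∈ H, h • b = b}))
        (fun k x y h =>
          Subtype.ext (show p ((k : G) • x.1) = p ((k : G) • y.1) by
            have hpe : ∀ (g : G) (y : E), p (g • y) = g • p y := hp.2.1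
            have h' : p x.1 = p y.1 := congrArg Subtype.val h
            rw [hpe, hpe, h'])) n ≤
      eqPTC G (fun (a : G) (x : E) => a • x) (fun a => continuous_const_smul a) p
        (fun a x y h => by rw [hp.2.1, hp.2.1, h]) n :=
  ⟨fun k x => hp.2.1 k x.1, eqPTC_fixedSet_le (hc := fun a => continuous_const_smul a) hp.2.1
    Subtype.val (fun k x hx => hinv k.1 k.2 x hx) (by omega)⟩
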